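/- arXiv:1305.4739 — 5 statements merged into one kernel-verified Lean document; each statement's English description precedes it below -/
import Mathlib

section
/- 𝔭 ≤ add(M): the pseudo-intersection number is at most the additivity of the meager ideal. -/
open Cardinal Set Filter MeasureTheory

/-- `F` is a filter base: a family of infinite subsets of `ℕ` such that every finite
subfamily has infinite intersection. -/
def IsFilterBase (F : Set (Set ℕ)) : Prop :=
  (∀ A ∈ F, A.Infinite) ∧ ∀ G ⊆ F, G.Finite → (⋂₀ G).Infinite

/-- `X` is a pseudo-intersection of `F`: `X` is infinite and almost contained in
every member of `F`. -/
def IsPseudoIntersection (X : Set ℕ) (F : Set (Set ℕ)) : Prop :=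
  X.Infinite ∧ ∀ A ∈ F, (X \ A).Finite

/-- The pseudo-intersection number `𝔭`: the least cardinality of a filter base with no
pseudo-intersection. -/
noncomputable def pNumber : Cardinal :=
  sInf { c | ∃ F : Set (Set ℕ), IsFilterBase F ∧
    (¬ ∃ X : Set ℕ, IsPseudoIntersection X F) ∧ #F = c }

/-- `add(M)`: the least cardinality of a family of meager subsets of `ℝ` whose union is
not meager. -/
noncomputable def addMeager : Cardinal :=
  sInf { c | ∃ F : Set (Set ℝ), (∀ s ∈ F, IsMeagre s) ∧ ¬ IsMeagre (⋃₀ F) ∧ #F = c }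

/-!
Fix a countable basis `B` of the space and code the finite unions of basic open sets by natural
numbers. For a family `𝒞` of nowhere dense sets, the codes of open sets disjoint from some
`C ∈ 𝒞`, together with the codes of open sets meeting some nonempty `B i`, form a filter base of
size at most `#𝒞 + ℵ₀`: finitely many nowhere dense sets leave room in every basic open set. If
`#𝒞 < 𝔭` it has a pseudo-intersection `X`. The points lying in infinitely many of the open sets
coded in `X` form a dense `G_δ`, and this `G_δ` misses every `C ∈ 𝒞`, so `⋃₀ 𝒞` is meagre.
-/

open TopologicalSpace

theorem exists_isPseudoIntersection_of_lt_pNumber {F : Set (Set ℕ)} (hF : IsFilterBase F)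
    (hlt : #F < pNumber) : ∃ X, IsPseudoIntersection X F := by
  by_contra h
  exact hlt.not_ge (csInf_le' ⟨F, hF, h, rfl⟩)

theorem isFilterBase_range {ι : Type*} {f : ι → Set ℕ}
    (h : ∀ s : Finset ι, (⋂ i ∈ s, f i).Infinite) : IsFilterBase (range f) := by
  refine ⟨?_, fun G hG hGfin => ?_⟩
  · rintro _ ⟨i, rfl⟩
    simpa using h {i}
  · classical
    obtain ⟨t, rfl⟩ := hGfin.exists_finset_coe
    rw [← image_univ, Finset.subset_set_image_iff] at hG
    obtain ⟨s, -, rfl⟩ := hG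
    simpa only [Finset.coe_image, sInter_image, Finset.mem_coe] using h s

theorem disjoint_blimsup_of_finite {E : Type*} {U : ℕ → Set E} {X : Set ℕ} {C : Set E}
    (hC : (X \ {n | Disjoint (U n) C}).Finite) : Disjoint C (blimsup U cofinite (· ∈ X)) := by
  rw [cofinite.blimsup_set_eq, Set.disjoint_left]
  intro x hxC hx
  exact hx (hC.subset fun n ⟨hnX, hxU⟩ => ⟨hnX, fun hdisj => hdisj.notMem_of_mem_left hxU hxC⟩)

section Topology

variable {E : Type*} [TopologicalSpace E]

theorem Set.Finite.isNowhereDense_biUnion {ι : Type*} {s : Set ι} (hs : s.Finite)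
    {C : ι → Set E} (hC : ∀ i ∈ s, IsNowhereDense (C i)) : IsNowhereDense (⋃ i ∈ s, C i) := by
  have hclosed : IsClosed (⋃ i ∈ s, closure (C i)) :=
    hs.isClosed_biUnion fun _ _ => isClosed_closure
  refine IsNowhereDense.mono (iUnion₂_mono fun _ _ => subset_closure) ?_
  rw [hclosed.isNowhereDense_iff, interior_eq_empty_iff_dense_compl, compl_iUnion₂, ← sInter_image]
  refine (hs.image _).dense_sInter ?_ ?_ <;> rintro _ ⟨i, hi, rfl⟩
  · exact isClosed_closure.isOpen_compl
  · exact interior_eq_empty_iff_dense_compl.1 (hC i hi)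

theorem blimsup_mem_residual {U : ℕ → Set E} (hU : ∀ n, IsOpen (U n)) {X : Set ℕ}
    (hX : ∀ O, IsOpen O → O.Nonempty → {n | n ∈ X ∧ (U n ∩ O).Nonempty}.Infinite) :
    blimsup U cofinite (· ∈ X) ∈ residual E := by
  rw [Nat.cofinite_eq_atTop, blimsup_eq_iInf_biSup_of_nat]
  refine countable_iInter_mem.2 fun m => residual_of_dense_open ?_ ?_
  · exact isOpen_biUnion fun n _ => hU n
  · refine dense_iff_inter_open.2 fun O hO hne => ?_
    obtain ⟨n, ⟨hnX, x, hxU, hxO⟩, hmn⟩ := (hX O hO hne).exists_gt m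
    exact ⟨x, hxO, mem_biUnion ⟨hnX, hmn.le⟩ hxU⟩

end Topology

section Coding

variable {E : Type*} (B : ℕ → Set E)

/-- The first coordinate of a code is padding, so that every finite union of the `B i` has
infinitely many codes. -/
noncomputable def codedUnion (n : ℕ) : Set E :=
  ⋃ i ∈ (Denumerable.ofNat (ℕ × List ℕ) n).2, B i

theorem infinite_setOf_codedUnion_eq (l : List ℕ) :
    {n | codedUnion B n = ⋃ i ∈ l, B i}.Infinite := by
  refine infinite_of_injective_forall_mem (f := fun k : ℕ => Encodable.encode (k, l)) ?_ ?_
  · intro a b h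
    simpa using Encodable.encode_injective h
  · intro k
    simp [codedUnion]

def cohenSets (𝒞 : Set (Set E)) : 𝒞 ⊕ {i // (B i).Nonempty} → Set ℕ
  | .inl C => {n | Disjoint (codedUnion B n) C}
  | .inr i => {n | (codedUnion B n ∩ B i).Nonempty}

variable {B} [TopologicalSpace E]

theorem isOpen_codedUnion (hB : ∀ i, IsOpen (B i)) (n : ℕ) : IsOpen (codedUnion B n) :=
  isOpen_biUnion fun i _ => hB i

theorem isFilterBase_range_cohenSets (hB : IsTopologicalBasis (range B)) {𝒞 : Set (Set E)}
    (h𝒞 : ∀ C ∈ 𝒞, IsNowhereDense C) : IsFilterBase (range (cohenSets B 𝒞)) := by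
  refine isFilterBase_range fun s => ?_
  set D := ⋃ C ∈ (s.toLeft : Set 𝒞), (C : Set E)
  have hD : IsNowhereDense D := s.toLeft.finite_toSet.isNowhereDense_biUnion fun C _ => h𝒞 C C.2
  have hpick : ∀ i : {i // (B i).Nonempty}, ∃ j, (B j).Nonempty ∧ B j ⊆ B i \ closure D := by
    rintro ⟨i, hi⟩
    have hopen : IsOpen (B i \ closure D) := (hB.isOpen (mem_range_self i)).sdiff isClosed_closure
    obtain ⟨_, ⟨j, rfl⟩, hj, hjsub⟩ := hB.exists_nonempty_subset
      ((interior_eq_empty_iff_dense_compl.1 hD).inter_open_nonempty _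
        (hB.isOpen (mem_range_self i)) hi) hopen
    exact ⟨j, hj, hjsub⟩
  choose j hj hjsub using hpick
  refine (infinite_setOf_codedUnion_eq B (s.toRight.toList.map j)).mono fun n hn => ?_
  simp only [mem_ofPred_eq] at hn
  refine mem_iInter₂.2 ?_
  rintro (C | i) hi
  · simp only [cohenSets, mem_ofPred_eq, hn, disjoint_iUnion_left]
    intro k hk
    obtain ⟨i, -, rfl⟩ := List.mem_map.1 hk
    refine Set.disjoint_left.2 fun x hx hxC => (hjsub i hx).2 (subset_closure ?_)
    exact mem_biUnion (Finset.mem_coe.2 (Finset.mem_toLeft.2 hi)) hxC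
  · obtain ⟨x, hx⟩ := hj i
    simp only [cohenSets, mem_ofPred_eq, hn]
    have hji : j i ∈ s.toRight.toList.map j :=
      List.mem_map_of_mem (Finset.mem_toList.2 (Finset.mem_toRight.2 hi))
    exact ⟨x, mem_biUnion hji hx, (hjsub i hx).1⟩

theorem isMeagre_sUnion_of_isPseudoIntersection (hB : IsTopologicalBasis (range B))
    {𝒞 : Set (Set E)} {X : Set ℕ} (hX : IsPseudoIntersection X (range (cohenSets B 𝒞))) :
    IsMeagre (⋃₀ 𝒞) := by
  obtain ⟨hXinf, hXsub⟩ := hX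
  have hres := blimsup_mem_residual (isOpen_codedUnion fun i => hB.isOpen (mem_range_self i))
    (X := X) fun O hO hne => ?_
  · refine mem_of_superset hres fun x hx ⟨C, hC, hxC⟩ => ?_
    exact (disjoint_blimsup_of_finite (hXsub _ ⟨.inl ⟨C, hC⟩, rfl⟩)).notMem_of_mem_left hxC hx
  · obtain ⟨_, ⟨i, rfl⟩, hi, hiO⟩ := hB.exists_nonempty_subset hne hO
    refine (hXinf.sdiff (hXsub _ ⟨.inr ⟨i, hi⟩, rfl⟩)).mono ?_
    rintro n ⟨hnX, hn⟩
    obtain ⟨x, hxU, hxB⟩ : (codedUnion B n ∩ B i).Nonempty := by_contra fun h => hn ⟨hnX, h⟩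
    exact ⟨hnX, x, hxU, hiO hxB⟩

end Coding

theorem isMeagre_sUnion_of_isNowhereDense_of_lt_pNumber {E : Type} [TopologicalSpace E]
    [SecondCountableTopology E] {𝒞 : Set (Set E)} (h𝒞 : ∀ C ∈ 𝒞, IsNowhereDense C)
    (hlt : #𝒞 < pNumber) (hp : ℵ₀ < pNumber) : IsMeagre (⋃₀ 𝒞) := by
  obtain ⟨B, hB⟩ := exists_seq_basis E
  have hcard : #(range (cohenSets B 𝒞)) < pNumber := calc
    _ ≤ #(𝒞 ⊕ {i // (B i).Nonempty}) := mk_range_le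
    _ = #𝒞 + #{i // (B i).Nonempty} := by rw [mk_sum, lift_id, lift_id]
    _ < pNumber := add_lt_of_lt hp.le hlt (mk_le_aleph0.trans_lt hp)
  obtain ⟨X, hX⟩ :=
    exists_isPseudoIntersection_of_lt_pNumber (isFilterBase_range_cohenSets hB h𝒞) hcard
  exact isMeagre_sUnion_of_isPseudoIntersection hB hX

theorem isMeagre_sUnion_of_lt_pNumber {E : Type} [TopologicalSpace E]
    [SecondCountableTopology E] {F : Set (Set E)} (hF : ∀ s ∈ F, IsMeagre s)
    (hlt : #F < pNumber) (hp : ℵ₀ < pNumber) : IsMeagre (⋃₀ F) := by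
  choose! S hS hScount hsub using
    fun s hs => isMeagre_iff_countable_union_isNowhereDense.1 (hF s hs)
  have hcard : #(⋃ s ∈ F, S s) < pNumber := calc
    _ ≤ #F * ⨆ s : F, #(S s) := mk_biUnion_le S F
    _ ≤ #F * ℵ₀ := by gcongr; exact ciSup_le' fun s => (hScount s s.2).le_aleph0
    _ < pNumber := mul_lt_of_lt hp.le hlt hp
  refine (isMeagre_sUnion_of_isNowhereDense_of_lt_pNumber ?_ hcard hp).mono ?_
  · simp only [mem_iUnion₂]
    rintro C ⟨s, hs, hC⟩
    exact hS s hs C hC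
  · exact sUnion_subset fun s hs => (hsub s hs).trans (sUnion_mono (subset_biUnion_of_mem hs))

theorem exists_isMeagre_family_not_isMeagre_sUnion :
    ∃ F : Set (Set ℝ), (∀ s ∈ F, IsMeagre s) ∧ ¬ IsMeagre (⋃₀ F) := by
  refine ⟨range singleton, ?_, ?_⟩
  · rintro _ ⟨x, rfl⟩
    refine IsNowhereDense.isMeagre ?_
    rw [IsNowhereDense, closure_singleton, interior_singleton]
  · rw [sUnion_range, iUnion_singleton_eq_range, range_id']
    exact not_isMeagre_of_isOpen isOpen_univ univ_nonempty

/-- `𝔭 ≤ add(M)`. -/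
theorem pNumber_le_addMeager : pNumber ≤ addMeager := by
  obtain ⟨F₀, hF₀, hF₀U⟩ := exists_isMeagre_family_not_isMeagre_sUnion
  refine le_csInf ⟨_, F₀, hF₀, hF₀U, rfl⟩ ?_
  rintro _ ⟨F, hF, hFU, rfl⟩
  by_contra! hlt
  have hF_uncountable : ℵ₀ < #F := by
    by_contra! h
    rw [sUnion_eq_biUnion] at hFU
    exact hFU (isMeagre_biUnion (mk_le_aleph0_iff.1 h) hF)
  exact hFU (isMeagre_sUnion_of_lt_pNumber hF hlt (hF_uncountable.trans hlt))
end

section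
/- 𝔰 ≤ 𝔡: the splitting number is at most the dominating number. -/
open Cardinal Set Filter

/-- `A` splits `B`: both `A ∩ B` and `B \ A` are infinite. -/
def Splits (A B : Set ℕ) : Prop := (A ∩ B).Infinite ∧ (B \ A).Infinite

/-- The splitting number `𝔰`: the least cardinality of a family `S` of infinite subsets
of `ℕ` such that every infinite `B ⊆ ℕ` is split by some member of `S`. -/
noncomputable def sNumber : Cardinal :=
  sInf { c | ∃ S : Set (Set ℕ), (∀ A ∈ S, A.Infinite) ∧
    (∀ B : Set ℕ, B.Infinite → ∃ A ∈ S, Splits A B) ∧ #S = c }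

/-- `f <* g`: `f n < g n` for all but finitely many `n`. -/
def DomLT (f g : ℕ → ℕ) : Prop := ∀ᶠ n in Filter.atTop, f n < g n

/-- The dominating number `𝔡`: the least cardinality of a family `D ⊆ ω^ω` such that
every `f ∈ ω^ω` satisfies `f <* g` for some `g ∈ D`. -/
noncomputable def dNumber : Cardinal :=
  sInf { c | ∃ D : Set (ℕ → ℕ), (∀ f : ℕ → ℕ, ∃ g ∈ D, DomLT f g) ∧ #D = c }

/-!
Every `g : ℕ → ℕ` determines a partition of `ℕ` into consecutive intervals
`[H k, H (k+1))` with `H (k+1) > g (H k)`; let `A g` be the union of the even-numbered ones.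
For infinite `B`, let `f n` be an element of `B` above `n`. If `f <* g`, then `f (H k)` lies
in the `k`-th interval for all large `k`, so `B` meets both infinitely many even and
infinitely many odd intervals, i.e. `A g` splits `B`. Hence `{A g | g ∈ D}` is a splitting
family for every dominating family `D`.
-/

section Blocks

/-- For strictly increasing `H`, the `k` with `m ∈ [H k, H (k+1))` (and `0` below `H 0`). -/
def blockIndex (H : ℕ → ℕ) (m : ℕ) : ℕ := Nat.findGreatest (fun k => H k ≤ m) m

variable {H : ℕ → ℕ}

lemma blockIndex_eq_of_mem_Ico (hH : StrictMono H) {m k : ℕ} (hm : m ∈ Ico (H k) (H (k + 1))) :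
    blockIndex H m = k := by
  refine Nat.findGreatest_eq_iff.2 ⟨hH.le_apply.trans hm.1, fun _ => hm.1, fun n hkn _ hn => ?_⟩
  exact absurd (hm.2.trans_le (hH.monotone hkn)) hn.not_gt

def evenBlocks (H : ℕ → ℕ) : Set ℕ := {m | Even (blockIndex H m)}

lemma infinite_inter_setOf_blockIndex (hH : StrictMono H) {B : Set ℕ}
    (hB : ∀ᶠ k in atTop, (B ∩ Ico (H k) (H (k + 1))).Nonempty) {p : ℕ → Prop}
    (hp : ∃ᶠ k in atTop, p k) : (B ∩ {m | p (blockIndex H m)}).Infinite := by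
  refine infinite_of_forall_exists_gt fun a => ?_
  obtain ⟨k, hpk, ⟨m, hmB, hm⟩, hak⟩ := (hp.and_eventually (hB.and (eventually_gt_atTop a))).exists
  refine ⟨m, ⟨hmB, ?_⟩, hak.trans_le (hH.le_apply.trans hm.1)⟩
  rwa [mem_ofPred_eq, blockIndex_eq_of_mem_Ico hH hm]

lemma splits_evenBlocks (hH : StrictMono H) {B : Set ℕ}
    (hB : ∀ᶠ k in atTop, (B ∩ Ico (H k) (H (k + 1))).Nonempty) : Splits (evenBlocks H) B := by
  constructor
  · rw [inter_comm]
    exact infinite_inter_setOf_blockIndex hH hB Nat.frequently_even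
  · exact infinite_inter_setOf_blockIndex hH hB (p := fun k => ¬Even k)
      (by simpa only [Nat.not_even_iff_odd] using Nat.frequently_odd)

lemma evenBlocks_infinite (hH : StrictMono H) : (evenBlocks H).Infinite := by
  have hblocks : ∀ k, ((univ : Set ℕ) ∩ Ico (H k) (H (k + 1))).Nonempty :=
    fun k => ⟨H k, trivial, le_rfl, hH k.lt_succ_self⟩
  simpa only [inter_univ] using (splits_evenBlocks hH (.of_forall hblocks)).1

end Blocks

/-- Each block `[jumpSeq g k, jumpSeq g (k+1))` contains `[jumpSeq g k, g (jumpSeq g k)]`. -/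
def jumpSeq (g : ℕ → ℕ) : ℕ → ℕ
  | 0 => 0
  | k + 1 => jumpSeq g k + g (jumpSeq g k) + 1

lemma jumpSeq_strictMono (g : ℕ → ℕ) : StrictMono (jumpSeq g) :=
  strictMono_nat_of_lt_succ fun k => by simp only [jumpSeq]; omega

lemma eventually_inter_Ico_jumpSeq_nonempty {B : Set ℕ} {f g : ℕ → ℕ} (hfB : ∀ n, f n ∈ B)
    (hf : ∀ n, n ≤ f n) (hfg : DomLT f g) :
    ∀ᶠ k in atTop, (B ∩ Ico (jumpSeq g k) (jumpSeq g (k + 1))).Nonempty :=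
  ((jumpSeq_strictMono g).tendsto_atTop.eventually hfg).mono
    fun k (hk : f (jumpSeq g k) < g (jumpSeq g k)) =>
      ⟨f (jumpSeq g k), hfB _, hf _, by simp only [jumpSeq]; omega⟩

lemma sNumber_le_mk {S : Set (Set ℕ)} (hS : ∀ A ∈ S, A.Infinite)
    (hsplit : ∀ B : Set ℕ, B.Infinite → ∃ A ∈ S, Splits A B) : sNumber ≤ #S :=
  csInf_le' ⟨S, hS, hsplit, rfl⟩

/-- `𝔰 ≤ 𝔡`. -/
theorem sNumber_le_dNumber : sNumber ≤ dNumber := by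
  have hdom_univ : ∀ f : ℕ → ℕ, ∃ g ∈ (univ : Set (ℕ → ℕ)), DomLT f g :=
    fun f => ⟨f + 1, trivial, .of_forall fun n => (f n).lt_succ_self⟩
  refine le_csInf ⟨_, univ, hdom_univ, rfl⟩ ?_
  rintro _ ⟨D, hD, rfl⟩
  calc sNumber ≤ #((fun g => evenBlocks (jumpSeq g)) '' D) := by
        refine sNumber_le_mk ?_ fun B hB => ?_
        · rintro _ ⟨g, -, rfl⟩
          exact evenBlocks_infinite (jumpSeq_strictMono g)
        · choose f hfB hf using fun n => hB.exists_gt n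
          obtain ⟨g, hgD, hfg⟩ := hD f
          exact ⟨_, mem_image_of_mem _ hgD, splits_evenBlocks (jumpSeq_strictMono g)
            (eventually_inter_Ico_jumpSeq_nonempty hfB (fun n => (hf n).le) hfg)⟩
    _ ≤ #D := mk_image_le
end

section
/- 𝔰 ≤ non(N): the splitting number is at most the uniformity of the null ideal. -/
open Cardinal Set Filter MeasureTheory

/-- `non(N)`: the least cardinality of a subset of `ℝ` that is not Lebesgue-null. -/
noncomputable def nonNull : Cardinal :=
  sInf { c | ∃ S : Set ℝ, volume S ≠ 0 ∧ #S = c }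

/-!
Send a real `x` to the set of positions of the digits `1` in its binary expansion. For a fixed
infinite `B`, the reals whose digit set meets `B` in a finite set are invariant under
translation by dyadic rationals (which change only finitely many digits), so by the ergodicity
of dyadic rotations of the circle they form a null or a conull set. Away from the countably many
dyadic rationals, `x ↦ -x` complements every digit, so it exchanges this set with the set of
reals whose digit set almost contains `B`. These two sets are disjoint, so they cannot both be
conull, and hence both are null. So the digit sets of the points of any non-null set form a
splitting family.
-/

open scoped Pointwise

theorem AddCircle.volume_coe_preimage_eq_zero_iff {T : ℝ} [Fact (0 < T)]
    {t : Set (AddCircle T)} (ht : MeasurableSet t) :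
    volume (((↑) : ℝ → AddCircle T) ⁻¹' t) = 0 ↔ volume t = 0 := by
  have hpiece (j : ℤ) :
      volume (((↑) : ℝ → AddCircle T) ⁻¹' t ∩ Ioc (j • T) ((j + 1) • T)) = volume t := by
    rw [add_one_zsmul, ← Measure.restrict_apply (measurableSet_quotient.mp ht)]
    exact (AddCircle.measurePreserving_mk T (j • T)).measure_preimage ht.nullMeasurableSet
  refine ⟨fun h => ?_, fun h => ?_⟩
  · rw [← hpiece 0]
    exact measure_mono_null inter_subset_left h
  · have hcover : ((↑) : ℝ → AddCircle T) ⁻¹' t ⊆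
        ⋃ j : ℤ, ((↑) : ℝ → AddCircle T) ⁻¹' t ∩ Ioc (j • T) ((j + 1) • T) := by
      rw [← inter_iUnion, iUnion_Ioc_zsmul Fact.out, inter_univ]
    exact measure_mono_null hcover (measure_iUnion_null fun j => (hpiece j).trans h)

theorem Real.volume_eq_zero_or_volume_compl_eq_zero_of_dyadic_invariant {E : Set ℝ}
    (hE : MeasurableSet E) (hinv : ∀ (k : ℤ) (N : ℕ) (x : ℝ), x + k / 2 ^ N ∈ E ↔ x ∈ E) :
    volume E = 0 ∨ volume Eᶜ = 0 := by
  let q : ℝ →+ UnitAddCircle := QuotientAddGroup.mk' _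
  set s : Set UnitAddCircle := q '' E
  have hpre : q ⁻¹' s = E := by
    refine Subset.antisymm (fun x ⟨y, hy, hyx⟩ => ?_) (subset_preimage_image q E)
    obtain ⟨k, hk⟩ := AddSubgroup.mem_zmultiples_iff.mp (QuotientAddGroup.eq.mp hyx)
    have hx : x = y + k / 2 ^ 0 := by
      rw [zsmul_one] at hk
      simp only [pow_zero, div_one]
      linarith
    rwa [hx, hinv]
  have hs : MeasurableSet s := measurableSet_quotient.mpr (hpre ▸ hE)
  have hrot (N : ℕ) : q (1 / (2 ^ N : ℕ)) +ᵥ s = s := by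
    rw [← image_vadd_distrib]
    congr 1
    ext x
    rw [mem_vadd_set_iff_neg_vadd_mem, vadd_eq_add, ← hinv (-1) N x]
    simp [add_comm, neg_div]
  have horder : Tendsto (addOrderOf ∘ fun N : ℕ => q (1 / (2 ^ N : ℕ))) atTop atTop := by
    have (N : ℕ) : addOrderOf (q (1 / (2 ^ N : ℕ))) = 2 ^ N :=
      AddCircle.addOrderOf_period_div (by positivity)
    simp only [Function.comp_def, this]
    exact tendsto_pow_atTop_atTop_of_one_lt one_lt_two
  have h01 := AddCircle.ae_empty_or_univ_of_forall_vadd_ae_eq_self hs.nullMeasurableSet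
    (fun N => (hrot N).eventuallyEq) horder
  rw [ae_eq_empty, ae_eq_univ] at h01
  refine h01.imp (fun h => ?_) (fun h => ?_)
  · rw [← hpre]
    exact (AddCircle.volume_coe_preimage_eq_zero_iff hs).mpr h
  · rw [← hpre, ← preimage_compl]
    exact (AddCircle.volume_coe_preimage_eq_zero_iff hs.compl).mpr h

theorem Set.finite_inter_iff_of_forall_ge_mem_iff {α : Type*} [LinearOrder α]
    [LocallyFiniteOrderBot α] {A A' B : Set α} {N : α}
    (h : ∀ n, N ≤ n → (n ∈ A ↔ n ∈ A')) : (A ∩ B).Finite ↔ (A' ∩ B).Finite := by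
  have key {A A' : Set α} (h : ∀ n, N ≤ n → (n ∈ A ↔ n ∈ A')) (hA' : (A' ∩ B).Finite) :
      (A ∩ B).Finite :=
    (hA'.union (finite_Iio N)).subset fun n ⟨hnA, hnB⟩ =>
      (le_or_gt N n).imp (fun hn => ⟨(h n hn).mp hnA, hnB⟩) id
  exact ⟨key fun n hn => (h n hn).symm, key h⟩

theorem measurableSet_setOf_finite_inter {α : Type*} [MeasurableSpace α] {f : α → Set ℕ}
    (hf : ∀ n, MeasurableSet {x | n ∈ f x}) (B : Set ℕ) :
    MeasurableSet {x | (f x ∩ B).Finite} := by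
  simp only [finite_iff_bddAbove, bddAbove_def, mem_inter_iff, and_imp]
  measurability

/-- `n ∈ binaryDigits x` iff the `(n + 1)`-st binary digit of `x` after the point is `1`. -/
def binaryDigits (x : ℝ) : Set ℕ := {n | ⌊x * 2 ^ (n + 1)⌋ % 2 = 1}

theorem measurableSet_setOf_mem_binaryDigits (n : ℕ) :
    MeasurableSet {x : ℝ | n ∈ binaryDigits x} :=
  (Int.measurable_floor.comp (measurable_id.mul_const _)) (.of_discrete (s := {m : ℤ | m % 2 = 1}))

theorem mem_binaryDigits_add_dyadic {n N : ℕ} (hN : N ≤ n) (k : ℤ) (x : ℝ) :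
    n ∈ binaryDigits (x + k / 2 ^ N) ↔ n ∈ binaryDigits x := by
  have hshift : (x + k / 2 ^ N) * 2 ^ (n + 1) =
      x * 2 ^ (n + 1) + ((k * 2 ^ (n - N) * 2 : ℤ) : ℝ) := by
    obtain ⟨d, rfl⟩ := Nat.exists_eq_add_of_le hN
    rw [Nat.add_sub_cancel_left]
    push_cast
    field_simp
    ring
  simp only [binaryDigits, mem_ofPred_eq, hshift, Int.floor_add_intCast,
    Int.add_mul_emod_self_right]

theorem mem_binaryDigits_neg {n : ℕ} {x : ℝ} (hx : x * 2 ^ (n + 1) ∉ range Int.cast) :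
    n ∈ binaryDigits (-x) ↔ n ∉ binaryDigits x := by
  simp only [binaryDigits, mem_ofPred_eq, neg_mul, Int.floor_neg,
    (Int.ceil_eq_floor_add_one_iff_notMem _).mpr hx]
  omega

theorem ae_binaryDigits_neg : ∀ᵐ x : ℝ, binaryDigits (-x) = (binaryDigits x)ᶜ := by
  have hdyadic : {x : ℝ | ∃ n : ℕ, x * 2 ^ (n + 1) ∈ range Int.cast}.Countable := by
    simp only [ofPred_exists]
    exact countable_iUnion fun n => (countable_range _).preimage
      (mul_left_injective₀ (by positivity))
  filter_upwards [measure_eq_zero_iff_ae_notMem.mp (hdyadic.measure_zero volume)] with x hx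
  simp only [not_exists] at hx
  ext n
  exact mem_binaryDigits_neg (hx n)

theorem setOf_finite_sdiff_binaryDigits_ae_eq_neg (B : Set ℕ) :
    {x : ℝ | (B \ binaryDigits x).Finite} =ᵐ[volume] -{x : ℝ | (binaryDigits x ∩ B).Finite} := by
  filter_upwards [ae_binaryDigits_neg] with x hx
  change (B \ binaryDigits x).Finite = (binaryDigits (-x) ∩ B).Finite
  rw [hx, inter_comm, sdiff_eq]

theorem volume_setOf_not_splits_binaryDigits {B : Set ℕ} (hB : B.Infinite) :
    volume {x : ℝ | ¬ Splits (binaryDigits x) B} = 0 := by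
  set E := {x : ℝ | (binaryDigits x ∩ B).Finite}
  set E' := {x : ℝ | (B \ binaryDigits x).Finite}
  have hdisj : Disjoint E E' := disjoint_left.mpr fun x hE hE' =>
    hB (by simpa [inter_comm, inter_union_sdiff] using hE.union hE')
  have hrefl : E' =ᵐ[volume] -E := setOf_finite_sdiff_binaryDigits_ae_eq_neg B
  have hE : MeasurableSet E :=
    measurableSet_setOf_finite_inter measurableSet_setOf_mem_binaryDigits B
  have hinv (k : ℤ) (N : ℕ) (x : ℝ) : x + k / 2 ^ N ∈ E ↔ x ∈ E :=
    finite_inter_iff_of_forall_ge_mem_iff fun n hn => mem_binaryDigits_add_dyadic hn k x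
  have hnull : volume E = 0 := by
    refine (Real.volume_eq_zero_or_volume_compl_eq_zero_of_dyadic_invariant hE hinv).resolve_right
      fun hconull => ?_
    have hconull' : volume E'ᶜ = 0 := by
      rwa [measure_congr hrefl.compl, ← compl_neg, Measure.measure_neg]
    have := measure_union_null hconull hconull'
    rw [← compl_inter, hdisj.inter_eq, compl_empty, Real.volume_univ] at this
    exact ENNReal.top_ne_zero this
  have hnull' : volume E' = 0 := by rwa [measure_congr hrefl, Measure.measure_neg]
  have hbad : {x : ℝ | ¬ Splits (binaryDigits x) B} = E ∪ E' := by
    ext x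
    simp only [Splits, not_and_or, not_infinite, mem_ofPred_eq, mem_union, E, E']
  rw [hbad]
  exact measure_union_null hnull hnull'

/-- `𝔰 ≤ non(N)`. -/
theorem sNumber_le_nonNull : sNumber ≤ nonNull := by
  obtain ⟨S, hS, hSc⟩ : nonNull ∈ {c | ∃ S : Set ℝ, volume S ≠ 0 ∧ #S = c} :=
    csInf_mem ⟨_, univ, by simp, rfl⟩
  have hsplit (B : Set ℕ) (hB : B.Infinite) : ∃ x ∈ S, Splits (binaryDigits x) B := by
    by_contra! h
    exact hS (measure_mono_null h (volume_setOf_not_splits_binaryDigits hB))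
  let F := {A : Set ℕ | A.Infinite} ∩ binaryDigits '' S
  have hF : ∀ B : Set ℕ, B.Infinite → ∃ A ∈ F, Splits A B := fun B hB => by
    obtain ⟨x, hx, hxB⟩ := hsplit B hB
    exact ⟨_, ⟨hxB.1.mono inter_subset_left, x, hx, rfl⟩, hxB⟩
  calc sNumber ≤ #F := csInf_le' ⟨F, fun A hA => hA.1, hF, rfl⟩
    _ ≤ #(binaryDigits '' S) := mk_le_mk_of_subset inter_subset_right
    _ ≤ #S := mk_image_le
    _ = nonNull := hSc
end

section
/- cov(N) ≤ 𝔯: the covering number of the null ideal is at most the reaping number. -/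
open Cardinal Set Filter MeasureTheory

/-- `cov(N)`: the least cardinality of a family of Lebesgue-null subsets of `ℝ` whose
union covers `ℝ`. -/
noncomputable def covNull : Cardinal :=
  sInf { c | ∃ F : Set (Set ℝ), (∀ s ∈ F, volume s = 0) ∧ ⋃₀ F = Set.univ ∧ #F = c }

/-- The reaping number `𝔯`: the least cardinality of a family `R` of infinite subsets of
`ℕ` such that no single infinite `A ⊆ ℕ` splits every member of `R`. -/
noncomputable def rNumber : Cardinal :=
  sInf { c | ∃ R : Set (Set ℕ), (∀ B ∈ R, B.Infinite) ∧
    (¬ ∃ A : Set ℕ, A.Infinite ∧ ∀ B ∈ R, Splits A B) ∧ #R = c }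

/-!
Let `A x ⊆ ℕ` be the set of positions of the binary digits `1` of `x`. For a fixed infinite
`B ⊆ ℕ`, prescribing the digits of `x` at `k` positions of `B` confines `x mod 1` to a set of
measure `2⁻ᵏ`, so the `x` whose digits are eventually constant on `B`, that is, those with
`A x` not splitting `B`, form a null set. If `R` witnesses `𝔯`, every `A x` fails to split some
member of `R`, so these `|R|` null sets cover `ℝ`.
-/

section BinaryDigits

/-- The `(n + 1)`-st binary digit of `x` after the point is `1`. -/
def binaryDigit (n : ℕ) (x : ℝ) : Prop := Odd ⌊x * 2 ^ (n + 1)⌋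

def digitSet (x : ℝ) : Set ℕ := {n | binaryDigit n x}

theorem binaryDigit_sub_intCast (n : ℕ) (x : ℝ) (k : ℤ) :
    binaryDigit n (x - k) ↔ binaryDigit n x := by
  have h : (x - k) * 2 ^ (n + 1) = x * 2 ^ (n + 1) - ((k * 2 ^ (n + 1) : ℤ) : ℝ) := by
    push_cast; ring
  rw [binaryDigit, binaryDigit, h, Int.floor_sub_intCast]
  simp [Int.odd_sub, parity_simps]

theorem binaryDigit_succ (n : ℕ) (x : ℝ) : binaryDigit (n + 1) x ↔ binaryDigit n (2 * x) := by
  rw [binaryDigit, binaryDigit, pow_succ, mul_comm 2 x, mul_assoc, mul_comm (2 : ℝ)]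

theorem binaryDigit_zero (x : ℝ) : binaryDigit 0 x ↔ Odd ⌊2 * x⌋ := by
  rw [binaryDigit, zero_add, pow_one, mul_comm]

def digitsConstOn (B : Set ℕ) (e : Prop) : Set ℝ :=
  {y | y ∈ Ico 0 1 ∧ ∀ n ∈ B, binaryDigit n y ↔ e}

variable {B : Set ℕ} {e : Prop}

theorem exists_two_mul_sub_mem_digitsConstOn {y : ℝ} (hy : y ∈ digitsConstOn B e) :
    ∃ b : ℤ, (b = 0 ∨ b = 1) ∧ (0 ∈ B → (Odd b ↔ e)) ∧
      2 * y - b ∈ digitsConstOn {n | n + 1 ∈ B} e := by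
  obtain ⟨⟨hy0, hy1⟩, hdig⟩ := hy
  refine ⟨⌊2 * y⌋, ?_, fun h0 => ?_, ?_, fun n hn => ?_⟩
  · have h0 : 0 ≤ ⌊2 * y⌋ := Int.floor_nonneg.2 (by linarith)
    have h2 : ⌊2 * y⌋ < 2 := Int.floor_lt.2 (by push_cast; linarith)
    omega
  · rw [← binaryDigit_zero]
    exact hdig 0 h0
  · rw [Int.self_sub_floor]
    exact ⟨Int.fract_nonneg _, Int.fract_lt_one _⟩
  · rw [binaryDigit_sub_intCast, ← binaryDigit_succ]
    exact hdig (n + 1) hn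

theorem volume_preimage_two_mul_sub (b : ℝ) (s : Set ℝ) :
    volume ((fun y => 2 * y - b) ⁻¹' s) = volume s / 2 := by
  have h : (fun y : ℝ => 2 * y - b) ⁻¹' s = (2 * ·) ⁻¹' ((· + -b) ⁻¹' s) := by
    ext y; simp [sub_eq_add_neg]
  rw [h, Real.volume_preimage_mul_left two_ne_zero, measure_preimage_add_right,
    abs_of_pos (by norm_num), ENNReal.ofReal_inv_of_pos two_pos, ENNReal.ofReal_ofNat,
    ENNReal.div_eq_inv_mul]

theorem volume_digitsConstOn_le_shift :
    volume (digitsConstOn B e) ≤ volume (digitsConstOn {n | n + 1 ∈ B} e) := by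
  have hsub : digitsConstOn B e ⊆ (fun y => 2 * y - 0) ⁻¹' digitsConstOn {n | n + 1 ∈ B} e ∪
      (fun y => 2 * y - 1) ⁻¹' digitsConstOn {n | n + 1 ∈ B} e := by
    intro y hy
    obtain ⟨b, rfl | rfl, -, hb⟩ := exists_two_mul_sub_mem_digitsConstOn hy
    exacts [Or.inl (by exact_mod_cast hb), Or.inr (by exact_mod_cast hb)]
  calc volume (digitsConstOn B e)
      ≤ volume (digitsConstOn {n | n + 1 ∈ B} e) / 2 +
          volume (digitsConstOn {n | n + 1 ∈ B} e) / 2 := by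
        refine (measure_mono hsub).trans ((measure_union_le _ _).trans ?_)
        rw [volume_preimage_two_mul_sub, volume_preimage_two_mul_sub]
    _ = volume (digitsConstOn {n | n + 1 ∈ B} e) := ENNReal.add_halves _

theorem volume_digitsConstOn_le_half_shift (h0 : 0 ∈ B) :
    volume (digitsConstOn B e) ≤ volume (digitsConstOn {n | n + 1 ∈ B} e) / 2 := by
  -- the digit at position `0 ∈ B` is `e`, which fixes the half of `[0, 1)` containing `y`
  obtain ⟨c, hc⟩ : ∃ c : ℤ, ∀ b : ℤ, (b = 0 ∨ b = 1) → (Odd b ↔ e) → b = c := by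
    by_cases he : e
    · refine ⟨1, fun b hb hodd => ?_⟩
      rcases hb with rfl | rfl <;> simp_all
    · refine ⟨0, fun b hb hodd => ?_⟩
      rcases hb with rfl | rfl <;> simp_all
  have hsub : digitsConstOn B e ⊆ (fun y => 2 * y - c) ⁻¹' digitsConstOn {n | n + 1 ∈ B} e := by
    intro y hy
    obtain ⟨b, hb01, hodd, hb⟩ := exists_two_mul_sub_mem_digitsConstOn hy
    rwa [← hc b hb01 (hodd h0)]
  exact (measure_mono hsub).trans (volume_preimage_two_mul_sub _ _).le

theorem volume_digitsConstOn_le_shift_add (m : ℕ) :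
    volume (digitsConstOn B e) ≤ volume (digitsConstOn {n | n + m ∈ B} e) := by
  induction m generalizing B with
  | zero => rfl
  | succ m ih => exact volume_digitsConstOn_le_shift.trans (ih (B := {n | n + 1 ∈ B}))

theorem infinite_setOf_add_mem (hB : B.Infinite) (m : ℕ) :
    {n | n + m ∈ B}.Infinite := by
  refine Set.infinite_of_forall_exists_gt fun a => ?_
  obtain ⟨b, hbB, hab⟩ := hB.exists_gt (a + m)
  exact ⟨b - m, show b - m + m ∈ B by rwa [Nat.sub_add_cancel (by omega)], by omega⟩

theorem volume_digitsConstOn_le_inv_two_pow (hB : B.Infinite) (k : ℕ) :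
    volume (digitsConstOn B e) ≤ 2⁻¹ ^ k := by
  induction k generalizing B with
  | zero => exact (measure_mono fun y hy => hy.1).trans (by simp)
  | succ k ih =>
    obtain ⟨m, hm⟩ := hB.nonempty
    calc volume (digitsConstOn B e)
        ≤ volume (digitsConstOn {n | n + m ∈ B} e) := volume_digitsConstOn_le_shift_add m
      _ ≤ volume (digitsConstOn {n | n + 1 + m ∈ B} e) / 2 :=
          volume_digitsConstOn_le_half_shift (by simpa using hm)
      _ ≤ 2⁻¹ ^ k / 2 := by
          gcongr
          simpa only [add_assoc] using ih (infinite_setOf_add_mem hB (1 + m))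
      _ = 2⁻¹ ^ (k + 1) := by rw [pow_succ, ENNReal.div_eq_inv_mul, mul_comm]

theorem volume_digitsConstOn_eq_zero (hB : B.Infinite) : volume (digitsConstOn B e) = 0 := by
  by_contra h
  obtain ⟨k, hk⟩ := ENNReal.exists_inv_two_pow_lt h
  exact (volume_digitsConstOn_le_inv_two_pow hB k).not_gt hk

theorem volume_setOf_binaryDigit_iff_eq_zero (hB : B.Infinite) :
    volume {x : ℝ | ∀ n ∈ B, binaryDigit n x ↔ e} = 0 := by
  have hsub : {x : ℝ | ∀ n ∈ B, binaryDigit n x ↔ e} ⊆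
      ⋃ k : ℤ, (· + -(k : ℝ)) ⁻¹' digitsConstOn B e := by
    intro x hx
    refine mem_iUnion.2 ⟨⌊x⌋, ?_, fun n hn => ?_⟩
    · simp only [← sub_eq_add_neg, Int.self_sub_floor]
      exact ⟨Int.fract_nonneg x, Int.fract_lt_one x⟩
    · simpa only [← sub_eq_add_neg, binaryDigit_sub_intCast] using hx n hn
  refine measure_mono_null hsub (measure_iUnion_null fun k => ?_)
  rw [measure_preimage_add_right]
  exact volume_digitsConstOn_eq_zero hB

theorem volume_setOf_not_splits_digitSet (hB : B.Infinite) :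
    volume {x : ℝ | ¬ Splits (digitSet x) B} = 0 := by
  have hsub : {x : ℝ | ¬ Splits (digitSet x) B} ⊆ ⋃ m : ℕ,
      ({x | ∀ n ∈ B \ Iic m, binaryDigit n x ↔ False} ∪
        {x | ∀ n ∈ B \ Iic m, binaryDigit n x ↔ True}) := by
    intro x hx
    rcases not_and_or.1 hx with hfin | hfin <;>
      obtain ⟨m, hm⟩ := (Set.not_infinite.1 hfin).bddAbove
    · exact mem_iUnion.2 ⟨m, Or.inl fun n hn => iff_false_intro fun hd => hn.2 (hm ⟨hd, hn.1⟩)⟩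
    · exact mem_iUnion.2 ⟨m, Or.inr fun n hn => iff_true_intro <| by
        by_contra hd; exact hn.2 (hm ⟨hn.1, hd⟩)⟩
  have hB' (m : ℕ) : (B \ Iic m).Infinite := hB.sdiff (finite_Iic m)
  exact measure_mono_null hsub <| measure_iUnion_null fun m => measure_union_null
    (volume_setOf_binaryDigit_iff_eq_zero (hB' m)) (volume_setOf_binaryDigit_iff_eq_zero (hB' m))

end BinaryDigits

theorem exists_reaping_family_card_eq_rNumber : ∃ R : Set (Set ℕ), (∀ B ∈ R, B.Infinite) ∧
    (¬ ∃ A : Set ℕ, A.Infinite ∧ ∀ B ∈ R, Splits A B) ∧ #R = rNumber := by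
  refine csInf_mem (s := {c | ∃ R : Set (Set ℕ), (∀ B ∈ R, B.Infinite) ∧
    (¬ ∃ A : Set ℕ, A.Infinite ∧ ∀ B ∈ R, Splits A B) ∧ #R = c})
    ⟨_, {B : Set ℕ | B.Infinite}, fun B hB => hB, ?_, rfl⟩
  rintro ⟨A, hA, hsplit⟩
  simpa using (hsplit A hA).2

theorem covNull_le_rNumber_of_ae_splits (A : ℝ → Set ℕ)
    (hA : ∀ B : Set ℕ, B.Infinite → volume {x | ¬ Splits (A x) B} = 0) : covNull ≤ rNumber := by
  obtain ⟨R, hR_inf, hR_reap, hR_card⟩ := exists_reaping_family_card_eq_rNumber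
  push Not at hR_reap
  have hcover : ⋃₀ ((fun B => {x | ¬ Splits (A x) B}) '' R) = Set.univ := by
    refine eq_univ_of_forall fun x => ?_
    by_cases hx : (A x).Infinite
    · obtain ⟨B, hB, hns⟩ := hR_reap _ hx
      exact ⟨_, mem_image_of_mem _ hB, hns⟩
    · obtain ⟨B, hB, -⟩ := hR_reap Set.univ infinite_univ
      exact ⟨_, mem_image_of_mem _ hB, fun hs => hx (hs.1.mono inter_subset_left)⟩
  calc covNull ≤ #((fun B => {x | ¬ Splits (A x) B}) '' R) :=
        csInf_le' ⟨_, forall_mem_image.2 fun B hB => hA B (hR_inf B hB), hcover, rfl⟩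
    _ ≤ #R := mk_image_le
    _ = rNumber := hR_card

/-- `cov(N) ≤ 𝔯`. -/
theorem covNull_le_rNumber : covNull ≤ rNumber :=
  covNull_le_rNumber_of_ae_splits digitSet fun _ => volume_setOf_not_splits_digitSet
end

section
/- 𝔟_▷ = max{𝔟, 𝔰} and 𝔡_▷ = min{𝔡, 𝔯}: the finitely splitting number 𝔣𝔰 = 𝔟_▷ equals max{𝔟, 𝔰}, and the finitely reaping number 𝔣𝔯 = 𝔡_▷ equals min{𝔡, 𝔯}. -/
open Cardinal Set Filter

/-- `J` is an interval partition of `ℕ`: a sequence of non-empty finite intervals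
partitioning `ℕ` with `max (J n) < min (J (n+1))` for all `n`. -/
def IsIntervalPartition (J : ℕ → Set ℕ) : Prop :=
  (∀ n, (J n).Finite) ∧ (∀ n, (J n).Nonempty) ∧
  (∀ n, ∀ x ∈ J n, ∀ z ∈ J n, ∀ y : ℕ, x ≤ y → y ≤ z → y ∈ J n) ∧
  (⋃ n, J n) = Set.univ ∧ (Set.univ : Set ℕ).PairwiseDisjoint J ∧
  (∀ n, ∀ x ∈ J n, ∀ y ∈ J (n + 1), x < y)

/-- `a` splits the interval partition `J̄`: `J k ⊆ a` for infinitely many `k` and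
`J k ⊆ ℕ \ a` for infinitely many `k`. -/
def SplitsIP (a : Set ℕ) (J : ℕ → Set ℕ) : Prop :=
  { k : ℕ | J k ⊆ a }.Infinite ∧ { k : ℕ | J k ⊆ aᶜ }.Infinite

/-- The finitely splitting number `𝔣𝔰 = 𝔟_▷`: the least cardinality of a family `A` of
infinite subsets of `ℕ` such that every interval partition of `ℕ` is split by some
`a ∈ A`. -/
noncomputable def fsNumber : Cardinal :=
  sInf { c | ∃ A : Set (Set ℕ), (∀ a ∈ A, a.Infinite) ∧
    (∀ J : ℕ → Set ℕ, IsIntervalPartition J → ∃ a ∈ A, SplitsIP a J) ∧ #A = c }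

/-- The finitely reaping number `𝔣𝔯 = 𝔡_▷`: the least cardinality of a family `D` of
interval partitions of `ℕ` such that no single infinite `a ⊆ ℕ` splits every member
of `D`. -/
noncomputable def frNumber : Cardinal :=
  sInf { c | ∃ D : Set (ℕ → Set ℕ), (∀ J ∈ D, IsIntervalPartition J) ∧
    (¬ ∃ a : Set ℕ, a.Infinite ∧ ∀ J ∈ D, SplitsIP a J) ∧ #D = c }

/-- The unbounding number `𝔟`. -/
noncomputable def bNumber : Cardinal :=
  sInf { c | ∃ F : Set (ℕ → ℕ), (∀ g : ℕ → ℕ, ∃ f ∈ F, ¬ DomLT f g) ∧ #F = c }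

/-!
A partition `J` is coarsened along a monotone `f > id` into the intervals
`[f^[j] 0, f^[j+1] 0)`. When `f` is infinitely often above `blockEnd J ∘ blockEnd J`,
infinitely many of these intervals contain a whole block of `J`, and for any `s` splitting that
set of indices the union of the intervals indexed by `s` splits `J`. So an unbounded family
together with a splitting family yields a family splitting all partitions, and dually a family
of partitions that no set splits yields a dominating family or, failing that, a reaping one.

In the other direction, an infinite `B` is traced by the partition along `nextAbove B`, every
block of which meets `B`; a set splitting that partition splits `B`. And if `nextAbove a` is
dominated by `g`, then all but finitely many intervals along a majorant of `g` meet `a`, so `a`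
cannot split that partition.
-/

universe u

noncomputable def minCard {X : Type u} (P : Set X → Prop) : Cardinal.{u} :=
  sInf {c | ∃ A : Set X, P A ∧ #A = c}

section minCard

variable {X : Type u} {P : Set X → Prop}

lemma minCard_le {A : Set X} (hA : P A) : minCard P ≤ #A :=
  csInf_le' ⟨A, hA, rfl⟩

lemma exists_mk_eq_minCard (h : ∃ A, P A) : ∃ A, P A ∧ #A = minCard P :=
  csInf_mem (s := {c | ∃ A : Set X, P A ∧ #A = c}) (h.elim fun A hA => ⟨_, A, hA, rfl⟩)

lemma le_minCard {c : Cardinal.{u}} (hP : ∃ A, P A) (h : ∀ A, P A → c ≤ #A) :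
    c ≤ minCard P :=
  le_csInf (hP.elim fun A hA => ⟨_, A, hA, rfl⟩) (by rintro _ ⟨A, hA, rfl⟩; exact h A hA)

end minCard

def IsUnboundedFamily (F : Set (ℕ → ℕ)) : Prop :=
  ∀ g : ℕ → ℕ, ∃ f ∈ F, ¬ DomLT f g

def IsDominatingFamily (D : Set (ℕ → ℕ)) : Prop :=
  ∀ f : ℕ → ℕ, ∃ g ∈ D, DomLT f g

def IsSplittingFamily (S : Set (Set ℕ)) : Prop :=
  (∀ A ∈ S, A.Infinite) ∧ ∀ B : Set ℕ, B.Infinite → ∃ A ∈ S, Splits A B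

def IsReapingFamily (R : Set (Set ℕ)) : Prop :=
  (∀ B ∈ R, B.Infinite) ∧ ¬ ∃ A : Set ℕ, A.Infinite ∧ ∀ B ∈ R, Splits A B

def IsFSFamily (A : Set (Set ℕ)) : Prop :=
  (∀ a ∈ A, a.Infinite) ∧
    ∀ J : ℕ → Set ℕ, IsIntervalPartition J → ∃ a ∈ A, SplitsIP a J

def IsFRFamily (D : Set (ℕ → Set ℕ)) : Prop :=
  (∀ J ∈ D, IsIntervalPartition J) ∧
    ¬ ∃ a : Set ℕ, a.Infinite ∧ ∀ J ∈ D, SplitsIP a J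

lemma bNumber_eq_minCard : bNumber = minCard IsUnboundedFamily := rfl

lemma dNumber_eq_minCard : dNumber = minCard IsDominatingFamily := rfl

lemma sNumber_eq_minCard : sNumber = minCard IsSplittingFamily := by
  simp only [sNumber, minCard, IsSplittingFamily, and_assoc]

lemma rNumber_eq_minCard : rNumber = minCard IsReapingFamily := by
  simp only [rNumber, minCard, IsReapingFamily, and_assoc]

lemma fsNumber_eq_minCard : fsNumber = minCard IsFSFamily := by
  simp only [fsNumber, minCard, IsFSFamily, and_assoc]

lemma frNumber_eq_minCard : frNumber = minCard IsFRFamily := by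
  simp only [frNumber, minCard, IsFRFamily, and_assoc]

namespace Set.PairwiseDisjoint

variable {ι α : Type*} {I : ι → Set α} (hI : (univ : Set ι).PairwiseDisjoint I)
include hI

lemma infinite_of_infinite_setOf_inter_nonempty {X : Set α}
    (h : {i | (I i ∩ X).Nonempty}.Infinite) : X.Infinite := by
  intro hX
  refine h ((hX.biUnion (t := fun x => {i | x ∈ I i}) fun x _ => ?_).subset ?_)
  · exact Subsingleton.finite fun i hi j hj =>
      hI.elim (mem_univ i) (mem_univ j) (not_disjoint_iff.2 ⟨x, hi, hj⟩)
  · rintro i ⟨x, hxI, hxX⟩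
    exact mem_biUnion hxX hxI

lemma infinite_inter_of_infinite_setOf_subset {X Y : Set α} (hX : ∀ i, (I i ∩ X).Nonempty)
    (h : {i | I i ⊆ Y}.Infinite) : (Y ∩ X).Infinite :=
  hI.infinite_of_infinite_setOf_inter_nonempty
    (h.mono fun i (hi : I i ⊆ Y) => (hX i).mono fun _ hx => ⟨hx.1, hi hx.1, hx.2⟩)

lemma subset_compl_biUnion {s : Set ι} {i : ι} (hi : i ∉ s) : I i ⊆ (⋃ j ∈ s, I j)ᶜ :=
  subset_compl_iff_disjoint_right.2 <| disjoint_iUnion₂_right.2 fun j hj =>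
    hI (mem_univ i) (mem_univ j) (ne_of_mem_of_not_mem hj hi).symm

end Set.PairwiseDisjoint

lemma Set.PairwiseDisjoint.splitsIP_biUnion {I : ℕ → Set ℕ}
    (hI : (univ : Set ℕ).PairwiseDisjoint I) {s : Set ℕ} (hs : s.Infinite)
    (hs' : sᶜ.Infinite) : SplitsIP (⋃ j ∈ s, I j) I :=
  ⟨hs.mono fun _ hj => subset_biUnion_of_mem hj,
    hs'.mono fun _ hj => hI.subset_compl_biUnion hj⟩

noncomputable def blockEnd (J : ℕ → Set ℕ) (n : ℕ) : ℕ := sSup (J n) + 1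

namespace IsIntervalPartition

variable {J : ℕ → Set ℕ} (hJ : IsIntervalPartition J)
include hJ

lemma finite (k : ℕ) : (J k).Finite := hJ.1 k

lemma nonempty (k : ℕ) : (J k).Nonempty := hJ.2.1 k

lemma exists_mem (n : ℕ) : ∃ k, n ∈ J k :=
  mem_iUnion.1 (hJ.2.2.2.1 ▸ mem_univ n)

lemma pairwiseDisjoint : (univ : Set ℕ).PairwiseDisjoint J := hJ.2.2.2.2.1

lemma le_of_mem {k x : ℕ} (hx : x ∈ J k) : k ≤ x := by
  induction k generalizing x with
  | zero => exact Nat.zero_le x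
  | succ k ih =>
    obtain ⟨z, hz⟩ := hJ.nonempty k
    exact (ih hz).trans_lt (hJ.2.2.2.2.2 k z hz x hx)

lemma subset_Ico_blockEnd (n : ℕ) : J n ⊆ Ico n (blockEnd J n) :=
  fun _ hx => ⟨hJ.le_of_mem hx, Nat.lt_succ_of_le (le_csSup (hJ.finite n).bddAbove hx)⟩

lemma infinite_of_infinite_setOf_subset {Y : Set ℕ} (h : {k | J k ⊆ Y}.Infinite) :
    Y.Infinite := by
  simpa using hJ.pairwiseDisjoint.infinite_inter_of_infinite_setOf_subset
    (X := univ) (by simpa using hJ.nonempty) h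

lemma infinite_biUnion {s : Set ℕ} (hs : s.Infinite) : (⋃ j ∈ s, J j).Infinite :=
  hJ.infinite_of_infinite_setOf_subset (hs.mono fun _ hj => subset_biUnion_of_mem hj)

lemma exists_splitsIP : ∃ a : Set ℕ, a.Infinite ∧ SplitsIP a J := by
  have hsplit := hJ.pairwiseDisjoint.splitsIP_biUnion (s := {k | Even k})
    (infinite_of_forall_exists_gt fun n => ⟨2 * n + 2, by simp [Nat.even_add], by omega⟩)
    (infinite_of_forall_exists_gt fun n => ⟨2 * n + 1, by simp, by omega⟩)
  exact ⟨_, hJ.infinite_of_infinite_setOf_subset hsplit.1, hsplit⟩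

end IsIntervalPartition

def iterPartition (h : ℕ → ℕ) (j : ℕ) : Set ℕ := Ico (h^[j] 0) (h^[j + 1] 0)

section iterPartition

variable {h : ℕ → ℕ} (hh : ∀ n, n < h n)
include hh

lemma strictMono_iterate_apply_zero : StrictMono fun j => h^[j] 0 :=
  strictMono_nat_of_lt_succ fun j => by rw [Function.iterate_succ_apply']; exact hh _

lemma isIntervalPartition_iterPartition : IsIntervalPartition (iterPartition h) := by
  have hmono := strictMono_iterate_apply_zero hh
  refine ⟨fun _ => finite_Ico _ _, fun j => nonempty_Ico.2 (hmono j.lt_succ_self),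
    fun j x hx z hz y hxy hyz => ordConnected_Ico.out hx hz ⟨hxy, hyz⟩, ?_, ?_,
    fun j x hx y hy => hx.2.trans_le hy.1⟩
  · exact (iUnion_Ico_map_succ_eq_Ici (fun j => hmono.monotone (Nat.zero_le j))
      hmono.not_bddAbove_range_of_wellFoundedLT).trans Ici_bot
  · exact pairwise_univ.2 hmono.monotone.pairwise_disjoint_on_Ico_succ

lemma eventually_iterPartition_inter_nonempty {g : ℕ → ℕ} {X : Set ℕ}
    (hgh : ∀ n, g n ≤ h n) (hX : ∀ᶠ n in atTop, (Ico n (g n) ∩ X).Nonempty) :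
    ∀ᶠ j in atTop, (iterPartition h j ∩ X).Nonempty := by
  refine ((strictMono_iterate_apply_zero hh).tendsto_atTop.eventually hX).mono fun j hj => ?_
  rw [iterPartition, Function.iterate_succ_apply']
  exact hj.mono (inter_subset_inter_left X (Ico_subset_Ico_right (hgh _)))

end iterPartition

def majorant (g : ℕ → ℕ) (n : ℕ) : ℕ := (Finset.range (n + 1)).sup g + n + 1

lemma monotone_majorant (g : ℕ → ℕ) : Monotone (majorant g) := fun m n hmn => by
  have := Finset.sup_mono (f := g) (Finset.range_subset_range.2 (Nat.add_le_add_right hmn 1))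
  simp only [majorant]
  omega

lemma lt_majorant (g : ℕ → ℕ) (n : ℕ) : n < majorant g n := by
  simp only [majorant]
  omega

lemma le_majorant (g : ℕ → ℕ) (n : ℕ) : g n ≤ majorant g n :=
  (Finset.le_sup (Finset.self_mem_range_succ n)).trans (by simp only [majorant]; omega)

noncomputable def nextAbove (B : Set ℕ) (n : ℕ) : ℕ := sInf {m | m ∈ B ∧ n < m} + 1

section nextAbove

variable {B : Set ℕ} (hB : B.Infinite)
include hB

lemma Ico_nextAbove_inter_nonempty (n : ℕ) : (Ico n (nextAbove B n) ∩ B).Nonempty := by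
  obtain ⟨hmB, hnm⟩ : sInf {m | m ∈ B ∧ n < m} ∈ {m | m ∈ B ∧ n < m} :=
    Nat.sInf_mem (hB.exists_gt n)
  exact ⟨_, ⟨hnm.le, Nat.lt_succ_self _⟩, hmB⟩

lemma isIntervalPartition_iterPartition_nextAbove :
    IsIntervalPartition (iterPartition (nextAbove B)) :=
  isIntervalPartition_iterPartition fun n =>
    nonempty_Ico.1 ((Ico_nextAbove_inter_nonempty hB n).mono inter_subset_left)

lemma splits_of_splitsIP_iterPartition_nextAbove {a : Set ℕ}
    (h : SplitsIP a (iterPartition (nextAbove B))) : Splits a B := by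
  have hmeet (j : ℕ) : (iterPartition (nextAbove B) j ∩ B).Nonempty := by
    rw [iterPartition, Function.iterate_succ_apply']
    exact Ico_nextAbove_inter_nonempty hB _
  have hdisj := (isIntervalPartition_iterPartition_nextAbove hB).pairwiseDisjoint
  exact ⟨hdisj.infinite_inter_of_infinite_setOf_subset hmeet h.1,
    sdiff_eq_compl_inter ▸ hdisj.infinite_inter_of_infinite_setOf_subset hmeet h.2⟩

lemma finite_setOf_iterPartition_majorant_subset_compl {g : ℕ → ℕ}
    (hg : DomLT (nextAbove B) g) : {j | iterPartition (majorant g) j ⊆ Bᶜ}.Finite := by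
  have hmeet := eventually_iterPartition_inter_nonempty (lt_majorant g) (le_majorant g)
    (Eventually.mono hg fun n hn => (Ico_nextAbove_inter_nonempty hB n).mono
      (inter_subset_inter_left B (Ico_subset_Ico_right hn.le)))
  rw [← Nat.cofinite_eq_atTop, eventually_cofinite] at hmeet
  exact hmeet.subset fun j hj ⟨x, hxI, hxB⟩ => hj hxI hxB

end nextAbove

def indicesContainingBlock (I J : ℕ → Set ℕ) : Set ℕ := {j | ∃ k, J k ⊆ I j}

lemma infinite_indicesContainingBlock_iterPartition {J : ℕ → Set ℕ} {G f : ℕ → ℕ}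
    (hG : ∀ n, ∃ k, J k ⊆ Ico n (G n)) (hf : Monotone f) (hff : ∀ n, n < f n)
    (hinf : {n | G (G n) ≤ f n}.Infinite) :
    (indicesContainingBlock (iterPartition f) J).Infinite := by
  refine infinite_of_forall_exists_gt fun M => ?_
  obtain ⟨n, hGn, hMn⟩ := hinf.exists_gt (f^[M + 1] 0)
  obtain ⟨j, hj⟩ := (isIntervalPartition_iterPartition hff).exists_mem n
  have hMj : M < j := by
    have := (strictMono_iterate_apply_zero hff).lt_iff_lt.1 (hMn.trans hj.2)
    omega
  have hfn : f n ≤ f^[j + 2] 0 := by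
    rw [Function.iterate_succ_apply']
    exact hf hj.2.le
  -- `J n` and `J (G n)` lie in `[n, G (G n)) ⊆ [f^[j] 0, f^[j + 2] 0)`, and the one not cut by
  -- `f^[j + 1] 0` lies in the `j`-th or the `(j + 1)`-st interval.
  by_cases hc : G n ≤ f^[j + 1] 0
  · obtain ⟨k, hk⟩ := hG n
    exact ⟨j, ⟨k, hk.trans (Ico_subset_Ico hj.1 hc)⟩, hMj⟩
  · obtain ⟨k, hk⟩ := hG (G n)
    exact ⟨j + 1, ⟨k, hk.trans (Ico_subset_Ico (not_le.1 hc).le (hGn.trans hfn))⟩, by omega⟩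

lemma IsIntervalPartition.infinite_indicesContainingBlock {J : ℕ → Set ℕ}
    (hJ : IsIntervalPartition J) {g : ℕ → ℕ}
    (hg : ¬ DomLT g fun n => blockEnd J (blockEnd J n)) :
    (indicesContainingBlock (iterPartition (majorant g)) J).Infinite := by
  refine infinite_indicesContainingBlock_iterPartition (fun n => ⟨n, hJ.subset_Ico_blockEnd n⟩)
    (monotone_majorant g) (lt_majorant g) ?_
  rw [DomLT, not_eventually, Nat.frequently_atTop_iff_infinite] at hg
  exact hg.mono fun n hn => (not_lt.1 hn).trans (le_majorant g n)

section splitsIP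

variable {I J : ℕ → Set ℕ} (hI : (univ : Set ℕ).PairwiseDisjoint I)
  (hJ : IsIntervalPartition J)
include hI hJ

lemma infinite_setOf_exists_subset {t : Set ℕ}
    (ht : (t ∩ indicesContainingBlock I J).Infinite) :
    {k | ∃ j ∈ t, J k ⊆ I j}.Infinite := by
  intro hK
  refine (hK.biUnion fun k _ => hJ.finite k).not_infinite
    (hI.infinite_of_infinite_setOf_inter_nonempty (ht.mono ?_))
  rintro j ⟨hjt, k, hk⟩
  obtain ⟨x, hx⟩ := hJ.nonempty k
  exact ⟨x, hk hx, mem_biUnion ⟨j, hjt, hk⟩ hx⟩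

lemma splitsIP_biUnion_of_splits {s : Set ℕ} (hs : Splits s (indicesContainingBlock I J)) :
    SplitsIP (⋃ j ∈ s, I j) J := by
  refine ⟨(infinite_setOf_exists_subset hI hJ hs.1).mono ?_,
    (infinite_setOf_exists_subset hI hJ (sdiff_eq_compl_inter ▸ hs.2)).mono ?_⟩
  · rintro k ⟨j, hj, hk⟩
    exact hk.trans (subset_biUnion_of_mem hj)
  · rintro k ⟨j, hj, hk⟩
    exact hk.trans (hI.subset_compl_biUnion hj)

end splitsIP

lemma isUnboundedFamily_univ : IsUnboundedFamily univ :=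
  fun g => ⟨g, mem_univ g, fun h => (Eventually.exists h).elim fun _ => lt_irrefl _⟩

lemma IsUnboundedFamily.aleph0_le_mk {F : Set (ℕ → ℕ)} (hF : IsUnboundedFamily F) :
    ℵ₀ ≤ #F := by
  rw [aleph0_le_mk_iff, infinite_coe_iff]
  intro hfin
  obtain ⟨f, hfF, hf⟩ := hF fun n => hfin.toFinset.sup (· n) + 1
  exact hf (Eventually.of_forall fun n =>
    Nat.lt_succ_of_le (Finset.le_sup (f := (· n)) (hfin.mem_toFinset.2 hfF)))

lemma isDominatingFamily_univ : IsDominatingFamily univ :=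
  fun f => ⟨f + 1, mem_univ _, Eventually.of_forall fun n => Nat.lt_succ_self (f n)⟩

lemma isReapingFamily_setOf_infinite : IsReapingFamily {B | B.Infinite} :=
  ⟨fun _ hB => hB, fun ⟨A, hA, h⟩ => by simpa using (h A hA).2⟩

lemma isFSFamily_setOf_infinite : IsFSFamily {a | a.Infinite} :=
  ⟨fun _ ha => ha, fun _ hJ => hJ.exists_splitsIP⟩

namespace IsFSFamily

variable {A : Set (Set ℕ)} (hA : IsFSFamily A)
include hA

lemma isUnboundedFamily_image_nextAbove : IsUnboundedFamily (nextAbove '' A) := by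
  intro g
  obtain ⟨a, haA, hsplit⟩ := hA.2 _ (isIntervalPartition_iterPartition (lt_majorant g))
  exact ⟨nextAbove a, mem_image_of_mem _ haA, fun hdom =>
    (finite_setOf_iterPartition_majorant_subset_compl (hA.1 a haA) hdom).not_infinite hsplit.2⟩

lemma isSplittingFamily : IsSplittingFamily A :=
  ⟨hA.1, fun _ hB => (hA.2 _ (isIntervalPartition_iterPartition_nextAbove hB)).imp
    fun _ ⟨haA, hsplit⟩ => ⟨haA, splits_of_splitsIP_iterPartition_nextAbove hB hsplit⟩⟩

end IsFSFamily

lemma isFSFamily_image2 {F : Set (ℕ → ℕ)} {S : Set (Set ℕ)} (hF : IsUnboundedFamily F)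
    (hS : IsSplittingFamily S) :
    IsFSFamily (image2 (fun f s => ⋃ j ∈ s, iterPartition (majorant f) j) F S) := by
  refine ⟨?_, fun J hJ => ?_⟩
  · rintro _ ⟨f, -, s, hs, rfl⟩
    exact (isIntervalPartition_iterPartition (lt_majorant f)).infinite_biUnion (hS.1 s hs)
  · obtain ⟨f, hfF, hf⟩ := hF fun n => blockEnd J (blockEnd J n)
    obtain ⟨s, hsS, hs⟩ := hS.2 _ (hJ.infinite_indicesContainingBlock hf)
    exact ⟨_, mem_image2_of_mem hfF hsS, splitsIP_biUnion_of_splits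
      (isIntervalPartition_iterPartition (lt_majorant f)).pairwiseDisjoint hJ hs⟩

lemma IsDominatingFamily.isFRFamily_image {D : Set (ℕ → ℕ)} (hD : IsDominatingFamily D) :
    IsFRFamily ((fun g => iterPartition (majorant g)) '' D) := by
  refine ⟨?_, ?_⟩
  · rintro _ ⟨g, -, rfl⟩
    exact isIntervalPartition_iterPartition (lt_majorant g)
  rintro ⟨a, -, hsplit⟩
  obtain ⟨g₀, hg₀D, -⟩ := hD id
  have hac : aᶜ.Infinite :=
    (isIntervalPartition_iterPartition (lt_majorant g₀)).infinite_of_infinite_setOf_subset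
      (hsplit _ (mem_image_of_mem _ hg₀D)).2
  obtain ⟨g, hgD, hdom⟩ := hD (nextAbove aᶜ)
  have hfin := finite_setOf_iterPartition_majorant_subset_compl hac hdom
  rw [compl_compl] at hfin
  exact hfin.not_infinite (hsplit _ (mem_image_of_mem _ hgD)).1

lemma IsReapingFamily.isFRFamily_image {R : Set (Set ℕ)} (hR : IsReapingFamily R) :
    IsFRFamily ((fun B => iterPartition (nextAbove B)) '' R) :=
  ⟨by rintro _ ⟨B, hB, rfl⟩; exact isIntervalPartition_iterPartition_nextAbove (hR.1 B hB),
    fun ⟨a, ha, hsplit⟩ => hR.2 ⟨a, ha, fun B hB => splits_of_splitsIP_iterPartition_nextAbove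
      (hR.1 B hB) (hsplit _ (mem_image_of_mem _ hB))⟩⟩

lemma IsFRFamily.isDominatingFamily_or_isReapingFamily {D : Set (ℕ → Set ℕ)}
    (hD : IsFRFamily D) :
    IsDominatingFamily ((fun J n => blockEnd J (blockEnd J n)) '' D) ∨
      ∃ f, IsReapingFamily (indicesContainingBlock (iterPartition (majorant f)) '' D) := by
  refine or_iff_not_imp_left.2 fun hdom => ?_
  obtain ⟨f, hf⟩ : ∃ f, ∀ J ∈ D, ¬ DomLT f fun n => blockEnd J (blockEnd J n) := by
    simpa [IsDominatingFamily] using hdom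
  have hIP := isIntervalPartition_iterPartition (lt_majorant f)
  refine ⟨f, ?_, ?_⟩
  · rintro _ ⟨J, hJ, rfl⟩
    exact (hD.1 J hJ).infinite_indicesContainingBlock (hf J hJ)
  rintro ⟨s, hs, hsplit⟩
  exact hD.2 ⟨_, hIP.infinite_biUnion hs, fun J hJ => splitsIP_biUnion_of_splits
    hIP.pairwiseDisjoint (hD.1 J hJ) (hsplit _ (mem_image_of_mem _ hJ))⟩

lemma bNumber_le_fsNumber : bNumber ≤ fsNumber := by
  rw [bNumber_eq_minCard, fsNumber_eq_minCard]
  exact le_minCard ⟨_, isFSFamily_setOf_infinite⟩ fun A hA =>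
    (minCard_le hA.isUnboundedFamily_image_nextAbove).trans mk_image_le

lemma sNumber_le_fsNumber : sNumber ≤ fsNumber := by
  rw [sNumber_eq_minCard, fsNumber_eq_minCard]
  exact le_minCard ⟨_, isFSFamily_setOf_infinite⟩ fun A hA => minCard_le hA.isSplittingFamily

lemma fsNumber_le_max : fsNumber ≤ max bNumber sNumber := by
  obtain ⟨F, hF, hFb⟩ := exists_mk_eq_minCard ⟨_, isUnboundedFamily_univ⟩
  obtain ⟨S, hS, hSs⟩ :=
    exists_mk_eq_minCard ⟨_, isFSFamily_setOf_infinite.isSplittingFamily⟩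
  rw [fsNumber_eq_minCard, bNumber_eq_minCard, sNumber_eq_minCard, ← hFb, ← hSs]
  calc minCard IsFSFamily ≤ #F * #S := (minCard_le (isFSFamily_image2 hF hS)).trans mk_image2_le
    _ ≤ max #F #S := mul_le_max_of_aleph0_le_left hF.aleph0_le_mk

lemma frNumber_le_dNumber : frNumber ≤ dNumber := by
  rw [frNumber_eq_minCard, dNumber_eq_minCard]
  exact le_minCard ⟨_, isDominatingFamily_univ⟩ fun D hD =>
    (minCard_le hD.isFRFamily_image).trans mk_image_le

lemma frNumber_le_rNumber : frNumber ≤ rNumber := by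
  rw [frNumber_eq_minCard, rNumber_eq_minCard]
  exact le_minCard ⟨_, isReapingFamily_setOf_infinite⟩ fun R hR =>
    (minCard_le hR.isFRFamily_image).trans mk_image_le

lemma min_le_frNumber : min dNumber rNumber ≤ frNumber := by
  rw [dNumber_eq_minCard, rNumber_eq_minCard, frNumber_eq_minCard]
  refine le_minCard ⟨_, isReapingFamily_setOf_infinite.isFRFamily_image⟩ fun D hD => ?_
  rcases hD.isDominatingFamily_or_isReapingFamily with hdom | ⟨f, hreap⟩
  · exact (min_le_left _ _).trans ((minCard_le hdom).trans mk_image_le)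
  · exact (min_le_right _ _).trans ((minCard_le hreap).trans mk_image_le)

/-- `𝔣𝔰 = 𝔟_▷ = max{𝔟, 𝔰}` and `𝔣𝔯 = 𝔡_▷ = min{𝔡, 𝔯}`. -/
theorem fsNumber_eq_max_and_frNumber_eq_min :
    fsNumber = max bNumber sNumber ∧ frNumber = min dNumber rNumber :=
  ⟨fsNumber_le_max.antisymm (max_le bNumber_le_fsNumber sNumber_le_fsNumber),
    (le_min frNumber_le_dNumber frNumber_le_rNumber).antisymm min_le_frNumber⟩
end
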